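/- In a Dedekind domain O whose ideal class group has order 2, for any nonprincipal fractional ideal I, the O-module O ⊕ O is isomorphic to I ⊕ I. -/

import Mathlib

open FractionalIdeal

/-- product of submodules as type equivalence -/
private def myProdEquiv {R M : Type*} [Ring R] [AddCommGroup M] [Module R M]
    (p q : Submodule R M) : ↥(p.prod q) ≃ₗ[R] (↥p × ↥q) where
  toFun x := (⟨x.1.1, x.2.1⟩, ⟨x.1.2, x.2.2⟩)
  invFun x := ⟨(x.1.1, x.2.1), ⟨x.1.2, x.2.2⟩⟩
  map_add' _ _ := rfl
  map_smul' _ _ := rfl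
  left_inv _ := rfl
  right_inv _ := rfl

private theorem matrix_equiv_aux {R A : Type*} [CommRing R] [Field A] [Algebra R A]
    (P Q M N : Submodule R A) (a b c d Δ : A)
    (hΔ : a * d - b * c = Δ) (hΔ0 : Δ ≠ 0)
    (h1 : ∀ z ∈ P, a * z ∈ M) (h2 : ∀ z ∈ Q, b * z ∈ M)
    (h3 : ∀ z ∈ P, c * z ∈ N) (h4 : ∀ z ∈ Q, d * z ∈ N)
    (h5 : ∀ z ∈ M, Δ⁻¹ * (d * z) ∈ P) (h6 : ∀ z ∈ N, Δ⁻¹ * (b * z) ∈ P)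
    (h7 : ∀ z ∈ M, Δ⁻¹ * (c * z) ∈ Q) (h8 : ∀ z ∈ N, Δ⁻¹ * (a * z) ∈ Q) :
    Nonempty ((↥P × ↥Q) ≃ₗ[R] (↥M × ↥N)) := by
  classical
  let Φ : A × A →ₗ[R] A × A :=
    LinearMap.prod
      ((LinearMap.mulLeft R a).comp (LinearMap.fst R A A)
        + (LinearMap.mulLeft R b).comp (LinearMap.snd R A A))
      ((LinearMap.mulLeft R c).comp (LinearMap.fst R A A)
        + (LinearMap.mulLeft R d).comp (LinearMap.snd R A A))
  let Ψ : A × A →ₗ[R] A × A :=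
    LinearMap.prod
      ((LinearMap.mulLeft R (Δ⁻¹ * d)).comp (LinearMap.fst R A A)
        - (LinearMap.mulLeft R (Δ⁻¹ * b)).comp (LinearMap.snd R A A))
      ((LinearMap.mulLeft R (Δ⁻¹ * a)).comp (LinearMap.snd R A A)
        - (LinearMap.mulLeft R (Δ⁻¹ * c)).comp (LinearMap.fst R A A))
  have key : ∀ x y : A, a * (Δ⁻¹ * d * x - Δ⁻¹ * b * y) + b * (Δ⁻¹ * a * y - Δ⁻¹ * c * x) = x
      ∧ c * (Δ⁻¹ * d * x - Δ⁻¹ * b * y) + d * (Δ⁻¹ * a * y - Δ⁻¹ * c * x) = y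
      ∧ Δ⁻¹ * d * (a * x + b * y) - Δ⁻¹ * b * (c * x + d * y) = x
      ∧ Δ⁻¹ * a * (c * x + d * y) - Δ⁻¹ * c * (a * x + b * y) = y := by
    intro x y
    have hΔinv : Δ⁻¹ * Δ = 1 := inv_mul_cancel₀ hΔ0
    refine ⟨?_, ?_, ?_, ?_⟩ <;>
      first
        | linear_combination Δ⁻¹ * x * hΔ + x * hΔinv
        | linear_combination Δ⁻¹ * y * hΔ + y * hΔinv
  have hΨΦ : Φ.comp Ψ = LinearMap.id := by
    apply LinearMap.ext
    rintro ⟨x, y⟩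
    have := key x y
    simp only [Φ, Ψ, LinearMap.comp_apply, LinearMap.prod_apply, Pi.prod, LinearMap.add_apply,
      LinearMap.sub_apply, LinearMap.coe_comp, Function.comp_apply, LinearMap.fst_apply,
      LinearMap.snd_apply, LinearMap.mulLeft_apply, LinearMap.id_apply]
    exact Prod.ext this.1 this.2.1
  have hΦΨ : Ψ.comp Φ = LinearMap.id := by
    apply LinearMap.ext
    rintro ⟨x, y⟩
    have := key x y
    simp only [Φ, Ψ, LinearMap.comp_apply, LinearMap.prod_apply, Pi.prod, LinearMap.add_apply,
      LinearMap.sub_apply, LinearMap.coe_comp, Function.comp_apply, LinearMap.fst_apply,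
      LinearMap.snd_apply, LinearMap.mulLeft_apply, LinearMap.id_apply]
    exact Prod.ext this.2.2.1 this.2.2.2
  let e : (A × A) ≃ₗ[R] (A × A) := LinearEquiv.ofLinear Φ Ψ hΨΦ hΦΨ
  have hmap : (P.prod Q).map (e : (A × A) →ₗ[R] (A × A)) = M.prod N := by
    apply le_antisymm
    · rintro ⟨u, v⟩ hmem
      obtain ⟨⟨x, y⟩, ⟨hx, hy⟩, heq⟩ := Submodule.mem_map.mp hmem
      have heq' : (a * x + b * y, c * x + d * y) = (u, v) := heq
      injection heq' with hu hv
      subst hu; subst hv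
      exact ⟨add_mem (h1 x hx) (h2 y hy), add_mem (h3 x hx) (h4 y hy)⟩
    · rintro ⟨m, n⟩ ⟨hm, hn⟩
      refine Submodule.mem_map.mpr ⟨e.symm (m, n), ?_, e.apply_symm_apply _⟩
      have hsymm : e.symm (m, n) = Ψ (m, n) := rfl
      rw [hsymm]
      constructor
      · show Δ⁻¹ * d * m - Δ⁻¹ * b * n ∈ P
        rw [mul_assoc, mul_assoc]
        exact sub_mem (h5 m hm) (h6 n hn)
      · show Δ⁻¹ * a * n - Δ⁻¹ * c * m ∈ Q
        rw [mul_assoc, mul_assoc]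
        exact sub_mem (h8 n hn) (h7 m hm)
  exact ⟨(myProdEquiv P Q).symm ≪≫ₗ LinearEquiv.ofSubmodules e _ _ hmap ≪≫ₗ myProdEquiv M N⟩


private theorem avoid_aux {O : Type*} [CommRing O] [IsDomain O] [IsDedekindDomain O]
    (J : Ideal O) (hJ : J ≠ ⊥) (s : Finset (Ideal O))
    (hs : ∀ P ∈ s, P.IsPrime ∧ P ≠ ⊥) :
    ∃ b ∈ J, b ≠ 0 ∧ ∀ P ∈ s, b ∉ P * J := by
  classical
  rcases s.eq_empty_or_nonempty with rfl | hne
  · obtain ⟨b, hbJ, hb0⟩ := Submodule.exists_mem_ne_zero_of_ne_bot hJ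
    exact ⟨b, hbJ, hb0, by simp⟩
  set N : Ideal O → Ideal O := fun P => J * ∏ Q ∈ s.erase P, Q with hN
  have hN0 : ∀ P ∈ s, N P ≠ 0 := by
    intro P _
    exact mul_ne_zero hJ (Finset.prod_ne_zero_iff.mpr fun Q hQ =>
      (hs Q (Finset.mem_of_mem_erase hQ)).2)
  have hlt : ∀ P ∈ s, N P * P < N P := by
    intro P hP
    refine lt_of_le_of_ne Ideal.mul_le_left ?_
    intro hEq
    have h1 : N P * P = N P * ⊤ := by rw [hEq, Ideal.mul_top]
    have : P = (⊤ : Ideal O) := mul_left_cancel₀ (hN0 P hP) h1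
    exact (hs P hP).1.ne_top this
  have hx : ∀ P ∈ s, ∃ x, x ∈ N P ∧ x ∉ N P * P := fun P hP => SetLike.exists_of_lt (hlt P hP)
  choose! x hx1 hx2 using hx
  set b : O := ∑ P ∈ s, x P with hb
  have hbJ : b ∈ J := Submodule.sum_mem _ fun P hP => Ideal.mul_le_left (hx1 P hP)
  have hnot : ∀ P ∈ s, b ∉ P * J := by
    intro P hP hmem
    have hrest : ∑ Q ∈ s.erase P, x Q ∈ P * J := by
      refine Submodule.sum_mem _ fun Q hQ => ?_
      have hPmem : P ∈ s.erase Q := Finset.mem_erase.mpr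
        ⟨fun h => (Finset.mem_erase.mp hQ).1 h.symm, hP⟩
      have hle : N Q ≤ P * J := by
        rw [hN]
        calc J * ∏ Q' ∈ s.erase Q, Q'
            ≤ J * P := Ideal.mul_mono_right
              (Ideal.le_of_dvd (Finset.dvd_prod_of_mem _ hPmem))
          _ = P * J := mul_comm _ _
      exact hle (hx1 Q (Finset.mem_of_mem_erase hQ))
    have hxP : x P ∈ P * J := by
      have hxeq : x P = b - ∑ Q ∈ s.erase P, x Q := by
        rw [hb, ← Finset.add_sum_erase s x hP]; ring
      rw [hxeq]
      exact sub_mem hmem hrest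
    have hPprime : Prime P := Ideal.prime_of_isPrime (hs P hP).2 (hs P hP).1
    have hd1 : N P ∣ Ideal.span {x P} := Ideal.dvd_span_singleton.mpr (hx1 P hP)
    have hd2 : J * P ∣ Ideal.span {x P} := Ideal.dvd_span_singleton.mpr
      (by rwa [mul_comm] at hxP)
    obtain ⟨E, hE⟩ := hd1
    have hPdvd : P ∣ (∏ Q ∈ s.erase P, Q) * E := by
      have h3 : J * P ∣ J * ((∏ Q ∈ s.erase P, Q) * E) := by
        rw [← mul_assoc, show J * ∏ Q ∈ s.erase P, Q = N P from rfl, ← hE]; exact hd2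
      exact (mul_dvd_mul_iff_left hJ).mp h3
    have hPnotprod : ¬ P ∣ ∏ Q ∈ s.erase P, Q := by
      intro hdvd
      obtain ⟨Q, hQ, hPQ⟩ := (Prime.dvd_finset_prod_iff hPprime _).mp hdvd
      have hQs := Finset.mem_of_mem_erase hQ
      have hQP : Q ≤ P := Ideal.le_of_dvd hPQ
      have : Q = P := ((hs Q hQs).1.isMaximal (hs Q hQs).2).eq_of_le (hs P hP).1.ne_top hQP
      exact (Finset.mem_erase.mp hQ).1 this
    have hPE : P ∣ E := (hPprime.dvd_mul.mp hPdvd).resolve_left hPnotprod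
    obtain ⟨E', rfl⟩ := hPE
    have hfin : N P * P ∣ Ideal.span {x P} := ⟨E', by rw [hE]; ring⟩
    exact hx2 P hP (Ideal.dvd_span_singleton.mp hfin)
  refine ⟨b, hbJ, ?_, hnot⟩
  obtain ⟨P0, hP0⟩ := hne
  intro hb0
  exact hnot P0 hP0 (hb0 ▸ zero_mem _)


private theorem exists_pair {O K : Type*} [CommRing O] [IsDomain O] [IsDedekindDomain O]
    [Field K] [Algebra O K] [IsFractionRing O K]
    (I : FractionalIdeal (nonZeroDivisors O) K) (hI0 : I ≠ 0) :
    ∃ a ∈ I, ∃ b ∈ I, ∃ c ∈ (I⁻¹ : FractionalIdeal (nonZeroDivisors O) K),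
      ∃ d ∈ (I⁻¹ : FractionalIdeal (nonZeroDivisors O) K), a * d + b * c = 1 := by
  classical
  obtain ⟨z, J, hz, hIJ⟩ := exists_eq_spanSingleton_mul I
  set f := algebraMap O K with hf
  have hzK : f z ≠ 0 := fun h => hz (IsFractionRing.to_map_eq_zero_iff.mp h)
  have hJ0 : (J : FractionalIdeal (nonZeroDivisors O) K) ≠ 0 := by
    intro h
    apply hI0
    rw [hIJ, h, mul_zero]
  have hJbot : J ≠ ⊥ := by
    intro h
    exact hJ0 (by rw [h]; simp)
  obtain ⟨a0, ha0J, ha00⟩ := Submodule.exists_mem_ne_zero_of_ne_bot hJbot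
  obtain ⟨A, hA⟩ := Ideal.dvd_span_singleton.mpr ha0J
  have hA0 : A ≠ 0 := by
    rintro rfl
    rw [mul_zero] at hA
    exact ha00 (by simpa [Ideal.span_singleton_eq_bot] using hA)
  set s := (UniqueFactorizationMonoid.normalizedFactors A).toFinset with hsdef
  have hs : ∀ P ∈ s, P.IsPrime ∧ P ≠ ⊥ := by
    intro P hP
    have hPf := Multiset.mem_toFinset.mp hP
    have hprime := UniqueFactorizationMonoid.prime_of_normalized_factor P hPf
    exact ⟨Ideal.isPrime_of_prime hprime, hprime.ne_zero⟩
  obtain ⟨b0, hb0J, hb00, hbavoid⟩ := avoid_aux J hJbot s hs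
  obtain ⟨B, hB⟩ := Ideal.dvd_span_singleton.mpr hb0J
  have hB0 : B ≠ 0 := by
    rintro rfl
    rw [mul_zero] at hB
    exact hb00 (by simpa [Ideal.span_singleton_eq_bot] using hB)
  have hAB : A ⊔ B = ⊤ := by
    by_contra hne
    obtain ⟨M, hMmax, hMle⟩ := Ideal.exists_le_maximal _ hne
    have hMA : A ≤ M := le_trans le_sup_left hMle
    have hMB : B ≤ M := le_trans le_sup_right hMle
    have hMfac : M ∈ UniqueFactorizationMonoid.normalizedFactors A :=
      (Ideal.mem_normalizedFactors_iff hA0).mpr ⟨hMmax.isPrime, hMA⟩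
    have hb0mem : b0 ∈ M * J := by
      have hle : Ideal.span {b0} ≤ M * J := by
        rw [hB, mul_comm M J]
        exact Ideal.mul_mono_right hMB
      exact hle (Ideal.mem_span_singleton_self b0)
    exact hbavoid M (Multiset.mem_toFinset.mpr hMfac) hb0mem
  obtain ⟨α, hα, β, hβ, hαβ⟩ := Submodule.mem_sup.mp (hAB ▸ Submodule.mem_top : (1:O) ∈ A ⊔ B)
  have hfa0 : f a0 ≠ 0 := fun h => ha00 (IsFractionRing.to_map_eq_zero_iff.mp h)
  have hfb0 : f b0 ≠ 0 := fun h => hb00 (IsFractionRing.to_map_eq_zero_iff.mp h)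
  have hAcoe : (A : FractionalIdeal (nonZeroDivisors O) K) ≠ 0 := by
    simpa [FractionalIdeal.coeIdeal_eq_zero] using hA0
  have hBcoe : (B : FractionalIdeal (nonZeroDivisors O) K) ≠ 0 := by
    simpa [FractionalIdeal.coeIdeal_eq_zero] using hB0
  have hspanA : spanSingleton (nonZeroDivisors O) (f a0)
      = (J : FractionalIdeal (nonZeroDivisors O) K) * A := by
    rw [← FractionalIdeal.coeIdeal_span_singleton, hA, FractionalIdeal.coeIdeal_mul]
  have hspanB : spanSingleton (nonZeroDivisors O) (f b0)
      = (J : FractionalIdeal (nonZeroDivisors O) K) * B := by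
    rw [← FractionalIdeal.coeIdeal_span_singleton, hB, FractionalIdeal.coeIdeal_mul]
  have hJinvA : spanSingleton (nonZeroDivisors O) (f a0)⁻¹ * A
      = (J : FractionalIdeal (nonZeroDivisors O) K)⁻¹ := by
    calc spanSingleton (nonZeroDivisors O) (f a0)⁻¹ * (A : FractionalIdeal (nonZeroDivisors O) K)
        = (spanSingleton (nonZeroDivisors O) (f a0))⁻¹ * A := by rw [spanSingleton_inv]
      _ = ((J : FractionalIdeal (nonZeroDivisors O) K) * A)⁻¹ * A := by rw [hspanA]
      _ = (J : FractionalIdeal (nonZeroDivisors O) K)⁻¹ * ((A:FractionalIdeal (nonZeroDivisors O) K)⁻¹ * A) := by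
          rw [mul_inv]; ring
      _ = (J : FractionalIdeal (nonZeroDivisors O) K)⁻¹ := by
          rw [inv_mul_cancel₀ hAcoe, mul_one]
  have hJinvB : spanSingleton (nonZeroDivisors O) (f b0)⁻¹ * B
      = (J : FractionalIdeal (nonZeroDivisors O) K)⁻¹ := by
    calc spanSingleton (nonZeroDivisors O) (f b0)⁻¹ * (B : FractionalIdeal (nonZeroDivisors O) K)
        = (spanSingleton (nonZeroDivisors O) (f b0))⁻¹ * B := by rw [spanSingleton_inv]
      _ = ((J : FractionalIdeal (nonZeroDivisors O) K) * B)⁻¹ * B := by rw [hspanB]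
      _ = (J : FractionalIdeal (nonZeroDivisors O) K)⁻¹ * ((B:FractionalIdeal (nonZeroDivisors O) K)⁻¹ * B) := by
          rw [mul_inv]; ring
      _ = (J : FractionalIdeal (nonZeroDivisors O) K)⁻¹ := by
          rw [inv_mul_cancel₀ hBcoe, mul_one]
  have hIinv : (I⁻¹ : FractionalIdeal (nonZeroDivisors O) K)
      = spanSingleton (nonZeroDivisors O) (f z) * (J : FractionalIdeal (nonZeroDivisors O) K)⁻¹ := by
    rw [hIJ, mul_inv, spanSingleton_inv, inv_inv]
  refine ⟨(f z)⁻¹ * f a0, ?_, (f z)⁻¹ * f b0, ?_,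
    f z * ((f b0)⁻¹ * f β), ?_, f z * ((f a0)⁻¹ * f α), ?_, ?_⟩
  · rw [hIJ]
    exact FractionalIdeal.mul_mem_mul (mem_spanSingleton_self _ _)
      ((FractionalIdeal.mem_coeIdeal _).mpr ⟨a0, ha0J, rfl⟩)
  · rw [hIJ]
    exact FractionalIdeal.mul_mem_mul (mem_spanSingleton_self _ _)
      ((FractionalIdeal.mem_coeIdeal _).mpr ⟨b0, hb0J, rfl⟩)
  · rw [hIinv, ← hJinvB]
    exact FractionalIdeal.mul_mem_mul (mem_spanSingleton_self _ _)
      (FractionalIdeal.mul_mem_mul (mem_spanSingleton_self _ _)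
        ((FractionalIdeal.mem_coeIdeal _).mpr ⟨β, hβ, rfl⟩))
  · rw [hIinv, ← hJinvA]
    exact FractionalIdeal.mul_mem_mul (mem_spanSingleton_self _ _)
      (FractionalIdeal.mul_mem_mul (mem_spanSingleton_self _ _)
        ((FractionalIdeal.mem_coeIdeal _).mpr ⟨α, hα, rfl⟩))
  · have : (f z)⁻¹ * f a0 * (f z * ((f a0)⁻¹ * f α))
        + (f z)⁻¹ * f b0 * (f z * ((f b0)⁻¹ * f β)) = f α + f β := by
      field_simp
    rw [this, ← RingHom.map_add, hαβ, RingHom.map_one]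

/-- In a Dedekind domain `O` whose class group has order 2, for any nonprincipal
fractional ideal `I`, the `O`-module `O ⊕ O` is isomorphic to `I ⊕ I`. -/
theorem dedekind_sq_free {O K : Type*} [CommRing O] [IsDomain O] [IsDedekindDomain O]
    [Field K] [Algebra O K] [IsFractionRing O K]
    (hcl : Nat.card (ClassGroup O) = 2)
    (I : FractionalIdeal (nonZeroDivisors O) K)
    (hI : ¬ Submodule.IsPrincipal (I : Submodule O K)) :
    Nonempty ((O × O) ≃ₗ[O] (↥(I : Submodule O K) × ↥(I : Submodule O K))) := by
  classical
  have hI0 : I ≠ 0 := by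
    rintro rfl
    exact hI ⟨0, by simp⟩
  set u : (FractionalIdeal (nonZeroDivisors O) K)ˣ := Units.mk0 I hI0 with hu
  have h2 : ClassGroup.mk K u ^ 2 = 1 := by rw [← hcl]; exact pow_card_eq_one'
  have hmk : ClassGroup.mk K (u * u) = 1 := by rw [MonoidHom.map_mul, ← pow_two, h2]
  have hprin : Submodule.IsPrincipal (((u * u : (FractionalIdeal (nonZeroDivisors O) K)ˣ) :
      FractionalIdeal (nonZeroDivisors O) K) : Submodule O K) := ClassGroup.mk_eq_one_iff.mp hmk
  have huu : ((u * u : (FractionalIdeal (nonZeroDivisors O) K)ˣ) :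
      FractionalIdeal (nonZeroDivisors O) K) = I * I := by
    rw [Units.val_mul, hu]; rfl
  rw [huu] at hprin
  obtain ⟨⟨g, hg⟩⟩ := hprin
  have hgspan : ((I * I : FractionalIdeal (nonZeroDivisors O) K) : Submodule O K)
      = Submodule.span O {g} := hg
  have hII0 : I * I ≠ 0 := mul_ne_zero hI0 hI0
  have hspang : I * I = spanSingleton (nonZeroDivisors O) g := by
    apply FractionalIdeal.coeToSubmodule_injective
    show ((I * I : FractionalIdeal (nonZeroDivisors O) K) : Submodule O K)
      = ((spanSingleton (nonZeroDivisors O) g : FractionalIdeal (nonZeroDivisors O) K) :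
        Submodule O K)
    rw [FractionalIdeal.coe_spanSingleton, hgspan]
  have hg0 : g ≠ 0 := by
    rintro rfl
    rw [FractionalIdeal.spanSingleton_zero] at hspang
    exact hII0 hspang
  obtain ⟨a, ha, b, hb, c0, hc0, d0, hd0, habcd⟩ := exists_pair I hI0
  have hgI : spanSingleton (nonZeroDivisors O) g * I⁻¹ = I := by
    rw [← hspang, mul_assoc, mul_inv_cancel₀ hI0, mul_one]
  have hd : g * d0 ∈ I := by
    rw [← hgI]
    exact FractionalIdeal.mul_mem_mul (mem_spanSingleton_self _ g) hd0
  have hcmem : g * c0 ∈ I := by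
    rw [← hgI]
    exact FractionalIdeal.mul_mem_mul (mem_spanSingleton_self _ g) hc0
  set c : K := -(g * c0) with hcdef
  set d : K := g * d0 with hddef
  have hc : c ∈ (I : Submodule O K) := neg_mem (FractionalIdeal.mem_coe.mpr hcmem)
  have hdet : a * d - b * c = g := by
    rw [hcdef, hddef]
    linear_combination g * habcd
  -- memberships for the matrix lemma
  have hmem1 : ∀ x : K, x ∈ (((1 : FractionalIdeal (nonZeroDivisors O) K)) : Submodule O K) →
      ∀ w ∈ I, w * x ∈ (I : Submodule O K) := by
    intro x hx w hw
    rw [FractionalIdeal.coe_one] at hx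
    obtain ⟨r, rfl⟩ := Submodule.mem_one.mp hx
    rw [mul_comm, ← Algebra.smul_def]
    exact Submodule.smul_mem _ r (FractionalIdeal.mem_coe.mpr hw)
  have hmem2 : ∀ x : K, x ∈ (I : Submodule O K) → ∀ w ∈ (I : Submodule O K),
      g⁻¹ * (w * x) ∈ (((1 : FractionalIdeal (nonZeroDivisors O) K)) : Submodule O K) := by
    intro x hx w hw
    have hwx : w * x ∈ ((I * I : FractionalIdeal (nonZeroDivisors O) K) : Submodule O K) := by
      rw [FractionalIdeal.coe_mul]
      exact Submodule.mul_mem_mul hw hx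
    rw [hgspan] at hwx
    obtain ⟨r, hr⟩ := Submodule.mem_span_singleton.mp hwx
    have : g⁻¹ * (w * x) = algebraMap O K r := by
      rw [← hr, Algebra.smul_def, ← mul_assoc, mul_comm g⁻¹, mul_assoc,
        inv_mul_cancel₀ hg0, mul_one]
    rw [this, FractionalIdeal.coe_one]
    exact Submodule.mem_one.mpr ⟨r, rfl⟩
  obtain ⟨e2⟩ := matrix_equiv_aux
    (((1 : FractionalIdeal (nonZeroDivisors O) K)) : Submodule O K)
    (((1 : FractionalIdeal (nonZeroDivisors O) K)) : Submodule O K)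
    (I : Submodule O K) (I : Submodule O K) a b c d g hdet hg0
    (fun z hz => hmem1 z hz a ha) (fun z hz => hmem1 z hz b hb)
    (fun z hz => by
      rw [FractionalIdeal.coe_one] at hz
      obtain ⟨r, rfl⟩ := Submodule.mem_one.mp hz
      rw [mul_comm, ← Algebra.smul_def]
      exact Submodule.smul_mem _ r hc)
    (fun z hz => hmem1 z hz d (FractionalIdeal.mem_coe.mp
      (FractionalIdeal.mem_coe.mpr hd)))
    (fun z hz => hmem2 z hz d (FractionalIdeal.mem_coe.mpr hd))
    (fun z hz => hmem2 z hz b (FractionalIdeal.mem_coe.mpr hb))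
    (fun z hz => hmem2 z hz c hc)
    (fun z hz => hmem2 z hz a (FractionalIdeal.mem_coe.mpr ha))
  have hinj : Function.Injective (Algebra.linearMap O K) := by
    intro x y hxy
    exact IsFractionRing.injective O K hxy
  let e0 : O ≃ₗ[O] LinearMap.range (Algebra.linearMap O K) :=
    LinearEquiv.ofInjective (Algebra.linearMap O K) hinj
  have hPeq : LinearMap.range (Algebra.linearMap O K)
      = (((1 : FractionalIdeal (nonZeroDivisors O) K)) : Submodule O K) := by
    rw [FractionalIdeal.coe_one, Submodule.one_eq_range]
  let eO : O ≃ₗ[O] ↥(((1 : FractionalIdeal (nonZeroDivisors O) K)) : Submodule O K) :=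
    e0 ≪≫ₗ LinearEquiv.ofEq _ _ hPeq
  exact ⟨(eO.prodCongr eO) ≪≫ₗ e2⟩
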